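/- arXiv:1208.0655 — 7 statements merged into one kernel-verified Lean document; each statement's English description precedes it below -/
import Mathlib

section
/- Let Γ be a countable group acting by measure-preserving transformations on a probability space (X,μ). If every non-trivial factor of the action is faithful, then every non-trivial normal subgroup of Γ acts ergodically. -/
open MeasureTheory

/-- The factor space `Γ → Bool` with Γ acting by right translation on the index. -/
def RAct (Γ : Type) := Γ → Bool

instance RAct.measurableSpace (Γ : Type) : MeasurableSpace (RAct Γ) :=
  MeasurableSpace.pi (m := fun _ : Γ => inferInstance)

lemma RAct.measurable_apply {Γ : Type} (γ : Γ) :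
    Measurable fun f : RAct Γ => f γ := by
  have : Measurable fun f : ∀ _ : Γ, Bool => f γ := measurable_pi_apply γ
  exact this

lemma RAct.measurable_of_apply {Γ α : Type} [MeasurableSpace α] (g : α → RAct Γ)
    (h : ∀ γ : Γ, Measurable fun a => g a γ) : Measurable g := by
  have : Measurable (g : α → ∀ _ : Γ, Bool) := measurable_pi_lambda g h
  exact this

instance RAct.mulAction (Γ : Type) [Group Γ] : MulAction Γ (RAct Γ) where
  smul g f := fun γ => f (γ * g)
  one_smul f := funext fun γ => by show f (γ * 1) = f γ; rw [mul_one]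
  mul_smul g h f := funext fun γ => by
    show f (γ * (g * h)) = f (γ * g * h); rw [mul_assoc]

lemma RAct.smul_apply {Γ : Type} [Group Γ] (g : Γ) (f : RAct Γ) (γ : Γ) :
    (g • f) γ = f (γ * g) := rfl

/-- A subgroup `N` of `Γ` acts ergodically on `(X, μ)`. -/
def ErgodicSubgroup {Γ X : Type*} [Group Γ] [MulAction Γ X] [MeasurableSpace X]
    (μ : Measure X) (N : Subgroup Γ) : Prop :=
  ∀ A : Set X, MeasurableSet A → (∀ γ ∈ N, (fun x => γ • x) ⁻¹' A = A) →
    μ A = 0 ∨ μ A = 1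

/-- If every non-trivial factor of the action of `Γ` on `(X,μ)` is faithful, then every
non-trivial normal subgroup of `Γ` acts ergodically. -/
theorem stmt_1 {Γ X : Type} [Group Γ] [Countable Γ]
    [MeasurableSpace X] [MulAction Γ X]
    (μ : Measure X) [IsProbabilityMeasure μ]
    (hmpX : ∀ γ : Γ, MeasurePreserving (fun x => γ • x) μ μ)
    (hfactors : ∀ (Y : Type) [MeasurableSpace Y] [MulAction Γ Y] (ν : Measure Y),
      IsProbabilityMeasure ν →
      (∀ γ : Γ, MeasurePreserving (fun y => γ • y) ν ν) →
      ∀ π : X → Y, Measurable π → Measure.map π μ = ν →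
      (∀ γ : Γ, ∀ᵐ x ∂μ, π (γ • x) = γ • π x) →
      (∀ y : Y, ν ≠ Measure.dirac y) →
      ∀ γ : Γ, γ ≠ 1 → ν {y | γ • y = y} < 1) :
    ∀ N : Subgroup Γ, N.Normal → N ≠ ⊥ → ErgodicSubgroup μ N := by
  classical
  intro N hN hNbot A hA hAinv
  by_contra hcon
  push_neg at hcon
  obtain ⟨hA0, hA1⟩ := hcon
  -- a nontrivial element of N
  obtain ⟨n, hnN, hn1⟩ : ∃ n ∈ N, n ≠ 1 := by
    by_contra h
    push_neg at h
    exact hNbot (Subgroup.ext fun g => by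
      simp only [Subgroup.mem_bot]
      exact ⟨fun hg => h g hg, fun hg => hg ▸ N.one_mem⟩)
  -- the factor map
  set π : X → RAct Γ := fun x γ => if γ • x ∈ A then true else false with hπdef
  have hπapp : ∀ (x : X) (γ : Γ), π x γ = true ↔ γ • x ∈ A := by
    intro x γ
    by_cases h : γ • x ∈ A <;> simp [hπdef, h]
  have hπmeas : Measurable π := by
    refine RAct.measurable_of_apply π fun γ => ?_
    have hset : MeasurableSet ((fun x => γ • x) ⁻¹' A) := (hmpX γ).measurable hA
    exact Measurable.ite hset measurable_const measurable_const
  -- exact equivariance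
  have hequiv : ∀ (g : Γ) (x : X), π (g • x) = g • π x := by
    intro g x
    funext γ
    rw [RAct.smul_apply, Bool.eq_iff_iff, hπapp, hπapp, mul_smul]
  set ν : Measure (RAct Γ) := Measure.map π μ with hνdef
  have hνprob : IsProbabilityMeasure ν := Measure.isProbabilityMeasure_map hπmeas.aemeasurable
  have hsmulmeas : ∀ g : Γ, Measurable fun y : RAct Γ => g • y := by
    intro g
    refine RAct.measurable_of_apply _ fun γ => ?_
    exact RAct.measurable_apply (γ * g)
  have hmpY : ∀ g : Γ, MeasurePreserving (fun y : RAct Γ => g • y) ν ν := by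
    intro g
    refine ⟨hsmulmeas g, ?_⟩
    rw [hνdef, Measure.map_map (hsmulmeas g) hπmeas]
    have : (fun y : RAct Γ => g • y) ∘ π = π ∘ (fun x => g • x) := by
      funext x; exact (hequiv g x).symm
    rw [this, ← Measure.map_map hπmeas (hmpX g).measurable, (hmpX g).map_eq]
  -- ν is not a Dirac measure
  have hS : MeasurableSet {f : RAct Γ | f 1 = true} :=
    RAct.measurable_apply (1 : Γ) (MeasurableSet.singleton true)
  have hpre : π ⁻¹' {f : RAct Γ | f 1 = true} = A := by
    ext x
    simp only [Set.mem_preimage, Set.mem_setOf_eq, hπapp, one_smul]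
  have hνS : ν {f : RAct Γ | f 1 = true} = μ A := by
    rw [hνdef, Measure.map_apply hπmeas hS, hpre]
  have hnodirac : ∀ y : RAct Γ, ν ≠ Measure.dirac y := by
    intro y hy
    have h2 := hνS
    rw [hy, Measure.dirac_apply' y hS] at h2
    by_cases hyS : y ∈ {f : RAct Γ | f 1 = true}
    · rw [Set.indicator_of_mem hyS] at h2
      exact hA1 h2.symm
    · rw [Set.indicator_of_notMem hyS] at h2
      exact hA0 h2.symm
  -- apply the hypothesis
  have hlt := hfactors (RAct Γ) ν hνprob hmpY π hπmeas rfl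
    (fun g => Filter.Eventually.of_forall (hequiv g)) hnodirac n hn1
  -- but the fixed set of n has full measure
  have hFmeas : MeasurableSet {y : RAct Γ | n • y = y} := by
    have heq : {y : RAct Γ | n • y = y} = ⋂ γ : Γ, {y : RAct Γ | y (γ * n) = y γ} := by
      ext y
      simp only [Set.mem_setOf_eq, Set.mem_iInter]
      constructor
      · intro h γ
        have := congrFun h γ
        rwa [RAct.smul_apply] at this
      · intro h
        funext γ
        rw [RAct.smul_apply]
        exact h γ
    rw [heq]
    exact MeasurableSet.iInter fun γ =>
      measurableSet_eq_fun (RAct.measurable_apply (γ * n)) (RAct.measurable_apply γ)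
  have hfix : ∀ x : X, n • π x = π x := by
    intro x
    funext γ
    have hconj : γ * n * γ⁻¹ ∈ N := hN.conj_mem n hnN γ
    have hAc : (γ * n * γ⁻¹) • (γ • x) ∈ A ↔ γ • x ∈ A :=
      Set.ext_iff.mp (hAinv (γ * n * γ⁻¹) hconj) (γ • x)
    have hkey : (γ * n) • x = (γ * n * γ⁻¹) • (γ • x) := by
      rw [← mul_smul, inv_mul_cancel_right]
    have hmem : (γ * n) • x ∈ A ↔ γ • x ∈ A := by rw [hkey]; exact hAc
    rw [RAct.smul_apply, Bool.eq_iff_iff, hπapp, hπapp]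
    exact hmem
  have hνF : ν {y : RAct Γ | n • y = y} = 1 := by
    rw [hνdef, Measure.map_apply hπmeas hFmeas]
    have huniv : π ⁻¹' {y : RAct Γ | n • y = y} = Set.univ := by
      ext x
      simp only [Set.mem_preimage, Set.mem_setOf_eq, Set.mem_univ, iff_true]
      exact hfix x
    rw [huniv, measure_univ]
  rw [hνF] at hlt
  exact lt_irrefl _ hlt
end

section
/- Let Γ be a countable group with a totally ergodic, non-trivial measure-preserving action on (X,μ). If C ⊆ Γ is a subset such that the set of points x with C contained in the stabilizer of x has positive measure, then the subgroup generated by C is finite. -/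
open MeasureTheory

/-- The action of `Γ` on `(X, μ)` is totally ergodic: every infinite subgroup
acts ergodically. -/
def TotallyErgodic {Γ X : Type*} [Group Γ] [MulAction Γ X] [MeasurableSpace X]
    (μ : Measure X) : Prop :=
  ∀ N : Subgroup Γ, (N : Set Γ).Infinite → ErgodicSubgroup μ N

/-!
The points fixed by `C` are fixed by the infinite group `N = ⟨C⟩`, so every set `A ∩ Fix(C)`
is `N`-invariant. Since `Fix(C)` has positive measure, ergodicity of `N` gives it full measure,
and then `μ A = μ (A ∩ Fix(C)) ∈ {0, 1}` for every measurable `A`. A zero-one probability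
measure on a standard Borel space is a Dirac mass, contradicting non-triviality.
-/

section FixedPoints

variable {Γ X : Type*} [Group Γ] [MulAction Γ X]

lemma closure_le_stabilizer_of_forall_smul_eq {C : Set Γ} {x : X} (hx : ∀ γ ∈ C, γ • x = x) :
    Subgroup.closure C ≤ MulAction.stabilizer Γ x :=
  (Subgroup.closure_le _).2 hx

lemma preimage_smul_inter_eq_of_forall_smul_eq {N : Subgroup Γ} {F : Set X}
    (hF : ∀ x ∈ F, ∀ γ ∈ N, γ • x = x) (A : Set X) {γ : Γ} (hγ : γ ∈ N) :
    (fun x => γ • x) ⁻¹' (A ∩ F) = A ∩ F := by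
  ext x
  by_cases hx : x ∈ F
  · simp [hF x hx γ hγ]
  · have hγx : γ • x ∉ F := fun h => by
      have hxγ : γ⁻¹ • γ • x = γ • x := hF _ h γ⁻¹ (inv_mem hγ)
      rw [inv_smul_smul] at hxγ
      exact hx (hxγ ▸ h)
    simp [hx, hγx]

end FixedPoints

lemma ErgodicSubgroup.isZeroOneMeasure_of_forall_smul_eq {Γ X : Type*} [Group Γ] [MulAction Γ X]
    [MeasurableSpace X] {μ : Measure X} [IsProbabilityMeasure μ] {N : Subgroup Γ}
    (herg : ErgodicSubgroup μ N) {F : Set X} (hFm : MeasurableSet F)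
    (hF : ∀ x ∈ F, ∀ γ ∈ N, γ • x = x) (hF0 : μ F ≠ 0) :
    IsZeroOneMeasure μ := by
  have hFinv : ∀ γ ∈ N, (fun x => γ • x) ⁻¹' F = F := fun γ hγ => by
    simpa using preimage_smul_inter_eq_of_forall_smul_eq hF Set.univ hγ
  have hFc : μ Fᶜ = 0 :=
    (prob_compl_eq_zero_iff hFm).2 ((herg F hFm hFinv).resolve_left hF0)
  refine ⟨fun A hA => ?_⟩
  rw [← measure_inter_conull hFc]
  exact herg _ (hA.inter hFm) fun γ hγ => preimage_smul_inter_eq_of_forall_smul_eq hF A hγ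

theorem stmt_3_general {Γ X : Type*} [Group Γ]
    [MeasurableSpace X] [StandardBorelSpace X] [MulAction Γ X]
    (μ : Measure X) [IsProbabilityMeasure μ]
    (hte : TotallyErgodic (Γ := Γ) μ)
    (hnontriv : ∀ x : X, μ ≠ Measure.dirac x)
    (C : Set Γ)
    (hmeas : MeasurableSet {x : X | ∀ γ ∈ C, γ • x = x})
    (hpos : 0 < μ {x : X | ∀ γ ∈ C, γ • x = x}) :
    ((Subgroup.closure C : Subgroup Γ) : Set Γ).Finite := by
  by_contra hinf
  have hfix : ∀ x ∈ {x : X | ∀ γ ∈ C, γ • x = x}, ∀ γ ∈ Subgroup.closure C, γ • x = x :=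
    fun _ hx _ hγ => closure_le_stabilizer_of_forall_smul_eq hx hγ
  have := (hte _ hinf).isZeroOneMeasure_of_forall_smul_eq hmeas hfix hpos.ne'
  obtain ⟨x, hx⟩ := IsZeroOneMeasure.exists_eq_dirac (μ := μ)
  exact hnontriv x hx

/-- If the action is totally ergodic and non-trivial, and the set of points whose stabilizer
contains `C` has positive measure, then the subgroup generated by `C` is finite. -/
theorem stmt_3 {Γ X : Type*} [Group Γ] [Countable Γ]
    [MeasurableSpace X] [StandardBorelSpace X] [MulAction Γ X]
    (μ : Measure X) [IsProbabilityMeasure μ]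
    (hmp : ∀ γ : Γ, MeasurePreserving (fun x => γ • x) μ μ)
    (hte : TotallyErgodic (Γ := Γ) μ)
    (hnontriv : ∀ x : X, μ ≠ Measure.dirac x)
    (C : Set Γ)
    (hmeas : MeasurableSet {x : X | ∀ γ ∈ C, γ • x = x})
    (hpos : 0 < μ {x : X | ∀ γ ∈ C, γ • x = x}) :
    ((Subgroup.closure C : Subgroup Γ) : Set Γ).Finite :=
  stmt_3_general μ hte hnontriv C hmeas hpos
end

section
/- Let Γ be a countably infinite group with a faithful, non-trivial, totally ergodic measure-preserving action on (X,μ). Assume (as a hypothesis) that every infinite locally finite group contains an infinite abelian subgroup. Then the stabilizer Γ_x is finite for μ-almost every x ∈ X. -/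
open MeasureTheory

/-- A group is locally finite if every finite subset generates a finite subgroup. -/
def LocallyFiniteGroup (G : Type*) [Group G] : Prop :=
  ∀ F : Finset G, ((Subgroup.closure (F : Set G) : Subgroup G) : Set G).Finite

/-- Assuming the Hall–Kulatilaka–Kargapolov theorem (every infinite locally finite group
contains an infinite abelian subgroup), the stabilizer of almost every point of a faithful,
non-trivial, totally ergodic action is finite. -/
theorem stmt_8 {Γ X : Type} [Group Γ] [Countable Γ] [Infinite Γ]
    [MeasurableSpace X] [StandardBorelSpace X] [MulAction Γ X]
    (μ : Measure X) [IsProbabilityMeasure μ]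
    (hmp : ∀ γ : Γ, MeasurePreserving (fun x => γ • x) μ μ)
    (hte : TotallyErgodic (Γ := Γ) μ)
    (hnontriv : ∀ x : X, μ ≠ Measure.dirac x)
    (hfaithful : ∀ γ : Γ, γ ≠ 1 → μ {x : X | γ • x = x} < 1)
    (hHKK : ∀ (G : Type) [Group G], Infinite G → LocallyFiniteGroup G →
      ∃ A : Subgroup G, (∀ a ∈ A, ∀ b ∈ A, a * b = b * a) ∧ (A : Set G).Infinite) :
    ∀ᵐ x ∂μ, ((MulAction.stabilizer Γ x : Subgroup Γ) : Set Γ).Finite := by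
  letI := upgradeStandardBorel X
  -- measurability of fixed-point sets
  have hmeasFix : ∀ γ : Γ, MeasurableSet {x : X | γ • x = x} := fun γ =>
    ((hmp γ).measurable.stronglyMeasurable).measurableSet_eq_fun
      measurable_id.stronglyMeasurable
  -- elements with infinite centralizer have null fixed set
  have h1 : ∀ γ : Γ, γ ≠ 1 → ((Subgroup.centralizer {γ} : Subgroup Γ) : Set Γ).Infinite →
      μ {x : X | γ • x = x} = 0 := by
    intro γ hγ hcent
    have hinv : ∀ δ ∈ Subgroup.centralizer ({γ} : Set Γ),
        (fun x => δ • x) ⁻¹' {x : X | γ • x = x} = {x : X | γ • x = x} := by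
      intro δ hδ
      have hcomm : γ * δ = δ * γ := Subgroup.mem_centralizer_iff.1 hδ γ (Set.mem_singleton γ)
      ext x
      simp only [Set.mem_preimage, Set.mem_setOf_eq]
      constructor
      · intro h
        have : δ • γ • x = δ • x := by rw [smul_smul, ← hcomm, ← smul_smul]; exact h
        exact smul_left_cancel δ this
      · intro h
        rw [smul_smul, hcomm, ← smul_smul, h]
    rcases hte _ hcent _ (hmeasFix γ) hinv with h | h
    · exact h
    · exact absurd (h ▸ hfaithful γ hγ) (lt_irrefl 1)
  -- finitely generated subgroups of stabilizers: infinite ones have null fixed sets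
  have h2 : ∀ F : Finset Γ, ((Subgroup.closure (F : Set Γ) : Subgroup Γ) : Set Γ).Infinite →
      μ {x : X | ∀ γ ∈ F, γ • x = x} = 0 := by
    intro F hFinf
    set N := Subgroup.closure (F : Set Γ) with hN
    have hkey : ∀ x : X, (∀ γ ∈ F, γ • x = x) ↔ N ≤ MulAction.stabilizer Γ x := by
      intro x
      rw [hN, Subgroup.closure_le]
      constructor
      · intro h γ hγ
        exact h γ hγ
      · intro h γ hγ
        exact h hγ
    have hmeasA : MeasurableSet {x : X | ∀ γ ∈ F, γ • x = x} := by
      have : {x : X | ∀ γ ∈ F, γ • x = x} = ⋂ γ ∈ F, {x : X | γ • x = x} := by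
        ext x; simp
      rw [this]
      exact MeasurableSet.biInter F.countable_toSet fun γ _ => hmeasFix γ
    have hinv : ∀ δ ∈ N, (fun x => δ • x) ⁻¹' {x : X | ∀ γ ∈ F, γ • x = x}
        = {x : X | ∀ γ ∈ F, γ • x = x} := by
      intro δ hδ
      ext x
      simp only [Set.mem_preimage, Set.mem_setOf_eq]
      constructor
      · intro h
        have hst : N ≤ MulAction.stabilizer Γ (δ • x) := (hkey (δ • x)).1 h
        have : δ • δ • x = δ • x := hst hδ
        have hx : δ • x = x := smul_left_cancel δ this
        intro γ hγ
        have := h γ hγ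
        rwa [hx] at this
      · intro h
        have hx : δ • x = x := (hkey x).1 h hδ
        intro γ hγ
        rw [hx]
        exact h γ hγ
    rcases hte N hFinf _ hmeasA hinv with h | h
    · exact h
    · exfalso
      obtain ⟨γ, hγN, hγne⟩ := hFinf.exists_notMem_finite (Set.finite_singleton 1)
      have hγ1 : γ ≠ 1 := by simpa using hγne
      have hsub : {x : X | ∀ γ ∈ F, γ • x = x} ⊆ {x : X | γ • x = x} := by
        intro x hx
        exact (hkey x).1 hx hγN
      have := measure_mono (μ := μ) hsub
      rw [h] at this
      exact absurd (lt_of_lt_of_le (hfaithful γ hγ1) this) (lt_irrefl _)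
  -- assemble the a.e. statement
  have hA : ∀ᵐ x ∂μ, ∀ γ : Γ,
      (γ ≠ 1 ∧ ((Subgroup.centralizer {γ} : Subgroup Γ) : Set Γ).Infinite) → γ • x ≠ x := by
    rw [ae_all_iff]
    intro γ
    by_cases hc : γ ≠ 1 ∧ ((Subgroup.centralizer {γ} : Subgroup Γ) : Set Γ).Infinite
    · have := measure_eq_zero_iff_ae_notMem.1 (h1 γ hc.1 hc.2)
      filter_upwards [this] with x hx _ h
      exact hx h
    · filter_upwards with x h
      exact absurd h hc
  have hB : ∀ᵐ x ∂μ, ∀ F : Finset Γ,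
      ((Subgroup.closure (F : Set Γ) : Subgroup Γ) : Set Γ).Infinite →
      ¬ (∀ γ ∈ F, γ • x = x) := by
    rw [ae_all_iff]
    intro F
    by_cases hc : ((Subgroup.closure (F : Set Γ) : Subgroup Γ) : Set Γ).Infinite
    · have := measure_eq_zero_iff_ae_notMem.1 (h2 F hc)
      filter_upwards [this] with x hx _
      exact hx
    · filter_upwards with x h
      exact absurd h hc
  filter_upwards [hA, hB] with x hx1 hx2
  by_contra hinf
  have hinf' : ((MulAction.stabilizer Γ x : Subgroup Γ) : Set Γ).Infinite := hinf
  set S := MulAction.stabilizer Γ x with hS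
  haveI : Infinite S := hinf'.to_subtype
  -- local finiteness of the stabilizer
  haveI := Classical.decEq Γ
  have hLF : ∀ F : Finset S, ((Subgroup.closure (F : Set S) : Subgroup S) : Set S).Finite := by
    intro F
    set F' : Finset Γ := F.image (fun g : S => (g : Γ)) with hF'
    have hF'fix : ∀ γ ∈ F', γ • x = x := by
      intro γ hγ
      rw [hF', Finset.mem_image] at hγ
      obtain ⟨g, _, rfl⟩ := hγ
      exact g.2
    have hfin : ((Subgroup.closure (F' : Set Γ) : Subgroup Γ) : Set Γ).Finite := by
      by_contra hc
      exact hx2 F' hc hF'fix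
    have himg : (fun g : S => (g : Γ)) '' ((Subgroup.closure (F : Set S) : Subgroup S) : Set S)
        ⊆ ((Subgroup.closure (F' : Set Γ) : Subgroup Γ) : Set Γ) := by
      intro γ hγ
      obtain ⟨g, hg, rfl⟩ := hγ
      have : (Subgroup.closure (F : Set S)).map S.subtype = Subgroup.closure (S.subtype '' F) :=
        MonoidHom.map_closure S.subtype (F : Set S)
      have hmem : (g : Γ) ∈ (Subgroup.closure (F : Set S)).map S.subtype :=
        ⟨g, hg, rfl⟩
      rw [this] at hmem
      have himgeq : S.subtype '' (F : Set S) = (F' : Set Γ) := by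
        rw [hF', Finset.coe_image]
        rfl
      rwa [himgeq] at hmem
    exact Set.Finite.of_finite_image (hfin.subset himg)
      (Set.injOn_of_injective Subtype.val_injective)
  obtain ⟨A, hAcomm, hAinf⟩ := hHKK S inferInstance hLF
  obtain ⟨a, haA, hane⟩ := hAinf.exists_notMem_finite (Set.finite_singleton 1)
  have ha1 : a ≠ 1 := by simpa using hane
  have hγ1 : (a : Γ) ≠ 1 := by
    simpa using ha1
  have hcent : ((Subgroup.centralizer ({(a : Γ)} : Set Γ) : Subgroup Γ) : Set Γ).Infinite := by
    have himg : (fun g : S => (g : Γ)) '' (A : Set S) ⊆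
        ((Subgroup.centralizer ({(a : Γ)} : Set Γ) : Subgroup Γ) : Set Γ) := by
      rintro γ ⟨b, hb, rfl⟩
      rw [SetLike.mem_coe, Subgroup.mem_centralizer_iff]
      rintro h rfl
      have := hAcomm a haA b hb
      have : ((a * b : S) : Γ) = ((b * a : S) : Γ) := congrArg _ this
      simpa using this
    exact Set.Infinite.mono himg
      (hAinf.image (Set.injOn_of_injective Subtype.val_injective))
  exact hx1 (a : Γ) ⟨hγ1, hcent⟩ a.2
end

section
/- Let Γ be a countable group acting ergodically and measure-preservingly on a probability space (X,μ), and suppose H₀ ≤ Γ is a subgroup such that A₀ = {x : Γ_x = H₀} has positive measure. If T is a set of representatives for distinct left cosets of the normalizer N_Γ(H₀), then the sets {t·A₀ : t ∈ T} are pairwise disjoint and all have measure μ(A₀); in particular the normalizer N_Γ(H₀) has finite index in Γ. -/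
open MeasureTheory Pointwise

namespace MulAction

variable {G α : Type*} [Group G] [MulAction G α]

theorem mem_normalizer_of_stabilizer_eq_of_stabilizer_smul_eq {H : Subgroup G} {g : G} {a : α}
    (ha : stabilizer G a = H) (hga : stabilizer G (g • a) = H) :
    g ∈ Subgroup.normalizer (H : Set G) := by
  rw [Subgroup.mem_normalizer_iff_map_conj_eq]
  have h := stabilizer_smul_eq_stabilizer_map_conj g a
  rw [hga, ha] at h
  exact h.symm

theorem disjoint_smul_setOf_stabilizer_eq {H : Subgroup G} {s t : G}
    (hst : s⁻¹ * t ∉ Subgroup.normalizer (H : Set G)) :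
    Disjoint (s • {a : α | stabilizer G a = H}) (t • {a : α | stabilizer G a = H}) := by
  rw [Set.disjoint_left]
  rintro _ ⟨a, ha, rfl⟩ ⟨b, hb, hba⟩
  refine hst (mem_normalizer_of_stabilizer_eq_of_stabilizer_smul_eq (a := b) hb ?_)
  have hba : t • b = s • a := hba
  rwa [mul_smul, hba, inv_smul_smul]

end MulAction

theorem Subgroup.finiteIndex_of_disjoint_smul {G α : Type*} [Group G] [MulAction G α]
    [MeasurableSpace α] [MeasurableConstSMul G α] {μ : Measure α} [IsFiniteMeasure μ]
    [SMulInvariantMeasure G α μ] {K : Subgroup G} {A : Set α} (hA : NullMeasurableSet A μ)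
    (hA₀ : μ A ≠ 0) (hdisj : ∀ s t : G, s⁻¹ * t ∉ K → Disjoint (s • A) (t • A)) :
    K.FiniteIndex := by
  rw [finiteIndex_iff_finite_quotient]
  by_contra hfin
  have : Infinite (G ⧸ K) := not_finite_iff_infinite.mp hfin
  let e := Infinite.natEmbedding (G ⧸ K)
  have hpair : Pairwise (Function.onFun Disjoint fun n => (e n).out • A) := fun m n hmn =>
    hdisj _ _ fun hK => hmn <| e.injective <| by
      rw [← QuotientGroup.out_eq' (e m), ← QuotientGroup.out_eq' (e n)]
      exact QuotientGroup.eq.mpr hK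
  have hsum := tsum_measure_le_measure_univ (fun n => hA.smul (e n).out)
    (hpair.mono fun _ _ h => h.aedisjoint)
  simp only [measure_smul, ENNReal.tsum_const_eq_top_of_ne_zero hA₀, top_le_iff] at hsum
  exact measure_ne_top μ _ hsum

theorem stmt_9_general {Γ X : Type*} [Group Γ]
    [MeasurableSpace X] [MulAction Γ X]
    (μ : Measure X) [IsProbabilityMeasure μ]
    (hmp : ∀ γ : Γ, MeasurePreserving (fun x => γ • x) μ μ)
    (H₀ : Subgroup Γ)
    (hmeasA : MeasurableSet {x : X | MulAction.stabilizer Γ x = H₀})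
    (hpos : 0 < μ {x : X | MulAction.stabilizer Γ x = H₀})
    (T : Set Γ)
    (hT : ∀ s ∈ T, ∀ t ∈ T, s⁻¹ * t ∈ Subgroup.normalizer (H₀ : Set Γ) → s = t) :
    (T.Pairwise fun s t =>
      Disjoint (s • {x : X | MulAction.stabilizer Γ x = H₀})
        (t • {x : X | MulAction.stabilizer Γ x = H₀})) ∧
    (∀ t ∈ T, μ (t • {x : X | MulAction.stabilizer Γ x = H₀}) =
      μ {x : X | MulAction.stabilizer Γ x = H₀}) ∧
    (Subgroup.normalizer (H₀ : Set Γ)).FiniteIndex := by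
  have : MeasurableConstSMul Γ X := ⟨fun γ => (hmp γ).measurable⟩
  have : SMulInvariantMeasure Γ X μ :=
    ⟨fun γ _ hA => (hmp γ).measure_preimage hA.nullMeasurableSet⟩
  refine ⟨fun s hs t ht hst => ?_, fun t _ => measure_smul μ t _, ?_⟩
  · exact MulAction.disjoint_smul_setOf_stabilizer_eq fun h => hst (hT s hs t ht h)
  · exact Subgroup.finiteIndex_of_disjoint_smul hmeasA.nullMeasurableSet hpos.ne'
      fun s t => MulAction.disjoint_smul_setOf_stabilizer_eq

/-- If the action of `Γ` is ergodic and `A₀ = {x | Γ_x = H₀}` has positive measure, then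
translates of `A₀` by representatives of distinct left cosets of the normalizer of `H₀`
are pairwise disjoint and of equal measure; in particular the normalizer has finite index. -/
theorem stmt_9 {Γ X : Type*} [Group Γ] [Countable Γ]
    [MeasurableSpace X] [MulAction Γ X]
    (μ : Measure X) [IsProbabilityMeasure μ]
    (hmp : ∀ γ : Γ, MeasurePreserving (fun x => γ • x) μ μ)
    (herg : ErgodicSubgroup μ (⊤ : Subgroup Γ))
    (H₀ : Subgroup Γ)
    (hmeasA : MeasurableSet {x : X | MulAction.stabilizer Γ x = H₀})
    (hpos : 0 < μ {x : X | MulAction.stabilizer Γ x = H₀})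
    (T : Set Γ)
    (hT : ∀ s ∈ T, ∀ t ∈ T, s⁻¹ * t ∈ Subgroup.normalizer (H₀ : Set Γ) → s = t) :
    (T.Pairwise fun s t =>
      Disjoint (s • {x : X | MulAction.stabilizer Γ x = H₀})
        (t • {x : X | MulAction.stabilizer Γ x = H₀})) ∧
    (∀ t ∈ T, μ (t • {x : X | MulAction.stabilizer Γ x = H₀}) =
      μ {x : X | MulAction.stabilizer Γ x = H₀}) ∧
    (Subgroup.normalizer (H₀ : Set Γ)).FiniteIndex :=
  stmt_9_general μ hmp H₀ hmeasA hpos T hT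
end

section
/- If a countably infinite group Γ admits a non-trivial measure-preserving action all of whose non-trivial factors are faithful, then Γ contains no non-trivial finite normal subgroup. -/
/-!
Averaging over the orbits of a finite normal subgroup `N` gives a `Γ`-equivariant map
`x ↦ |N|⁻¹ ∑_{n ∈ N} δ_{n • x}` into the space of measures on `X`, whose image is fixed pointwise
by `N`. If this factor is non-trivial, any `n ≠ 1` in `N` contradicts its faithfulness. If it is
trivial, then `μ`, being the barycentre of the orbit averages, equals one of them and is therefore
supported on a finite set. The atoms of `μ` then form a finite `Γ`-invariant set; as `Γ` is
infinite, some `γ ≠ 1` fixes every atom, so `γ` acts trivially on `X` itself, contradicting the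
faithfulness of the identity factor.
-/

open MeasureTheory ProbabilityTheory
open scoped ENNReal

theorem exists_ne_one_forall_mem_smul_eq {Γ X : Type*} [Group Γ] [MulAction Γ X] [Infinite Γ]
    {A : Set X} (hA : A.Finite) (hAsmul : ∀ γ : Γ, ∀ x ∈ A, γ • x ∈ A) :
    ∃ γ : Γ, γ ≠ 1 ∧ ∀ x ∈ A, γ • x = x := by
  have : Finite A := hA.to_subtype
  obtain ⟨γ₁, γ₂, hne, heq⟩ := Finite.exists_ne_map_eq_of_infinite
    fun γ : Γ => fun a : A => (⟨γ • (a : X), hAsmul γ a a.2⟩ : A)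
  refine ⟨γ₁⁻¹ * γ₂, by rwa [Ne, inv_mul_eq_one], fun x hx => ?_⟩
  have h : γ₁ • x = γ₂ • x := congrArg Subtype.val (congrFun heq ⟨x, hx⟩)
  rw [mul_smul, ← h, inv_smul_smul]

theorem MeasureTheory.MeasurePreserving.map_of_semiconj {α β : Type*} [MeasurableSpace α]
    [MeasurableSpace β] {μ : Measure α} {f : α → β} {g : α → α} {g' : β → β}
    (hg : MeasurePreserving g μ μ) (hf : Measurable f) (hg' : Measurable g')
    (h : Function.Semiconj f g g') : MeasurePreserving g' (μ.map f) (μ.map f) :=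
  ⟨hg', by rw [Measure.map_map hg' hf, ← h.comp_eq, ← Measure.map_map hf hg.measurable,
    hg.map_eq]⟩

theorem MeasureTheory.Measure.ae_measure_singleton_ne_zero {X : Type*} [MeasurableSpace X]
    {μ : Measure X} {S : Set X} (hS : S.Finite) (hμS : μ Sᶜ = 0) : ∀ᵐ x ∂μ, μ {x} ≠ 0 := by
  have hnull : μ (S ∩ {x | μ {x} = 0}) = 0 := by
    rw [← Set.biUnion_of_singleton (S ∩ _),
      measure_biUnion_null_iff (hS.inter_of_left _).countable]
    exact fun x hx => hx.2
  filter_upwards [mem_ae_iff.2 hμS, measure_eq_zero_iff_ae_notMem.1 hnull] with x hxS hx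
  exact fun h0 => hx ⟨hxS, h0⟩

theorem ProbabilityTheory.Kernel.ae_eq_const_of_map_eq_dirac {α β : Type*}
    {mα : MeasurableSpace α} {mβ : MeasurableSpace β}
    [MeasurableSpace.CountableOrCountablyGenerated α β] {μ : Measure α} [IsFiniteMeasure μ]
    {κ : Kernel α β} [IsFiniteKernel κ] {ρ : Measure β} [IsFiniteMeasure ρ]
    (h : μ.map κ = Measure.dirac ρ) : ∀ᵐ a ∂μ, κ a = ρ := by
  have hset {t : Set β} (ht : MeasurableSet t) : ∀ᵐ a ∂μ, κ a t = ρ t := by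
    refine ae_of_ae_map (p := fun ν : Measure β => ν t = ρ t) κ.measurable.aemeasurable ?_
    rw [h]
    exact (ae_dirac_iff (Measure.measurable_coe ht (measurableSet_singleton _))).2 rfl
  have hprod : μ ⊗ₘ κ = μ ⊗ₘ Kernel.const α ρ := by
    rw [Measure.compProd_const]
    refine (Measure.prod_eq fun s t hs ht => ?_).symm
    rw [Measure.compProd_apply_prod hs ht,
      setLIntegral_congr_fun_ae hs ((hset ht).mono fun a ha _ => ha),
      MeasureTheory.lintegral_const, Measure.restrict_apply_univ, mul_comm]
  exact Kernel.ae_eq_of_compProd_eq hprod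

namespace MeasureTheory

variable {Γ X : Type*} [Group Γ] [MeasurableSpace X] [MulAction Γ X] [MeasurableConstSMul Γ X]

theorem exists_ne_one_ae_smul_eq [Infinite Γ] {μ : Measure X}
    (hμ : ∀ γ : Γ, MeasurePreserving (γ • ·) μ μ) {S : Set X} (hS : S.Finite) (hμS : μ Sᶜ = 0) :
    ∃ γ : Γ, γ ≠ 1 ∧ ∀ᵐ x ∂μ, γ • x = x := by
  have hatoms_fin : {x | μ {x} ≠ 0}.Finite :=
    hS.subset fun x hx => by_contra fun hxS =>
      hx (measure_mono_null (Set.singleton_subset_iff.2 hxS) hμS)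
  have hatoms_smul (γ : Γ) (x : X) (hx : μ {x} ≠ 0) : μ {γ • x} ≠ 0 := by
    have := (hμ γ⁻¹).measure_preimage_emb (measurableEmbedding_const_smul γ⁻¹) {x}
    rw [Set.preimage_smul_inv, Set.smul_set_singleton] at this
    rwa [this]
  obtain ⟨γ, hγ, hfix⟩ := exists_ne_one_forall_mem_smul_eq hatoms_fin hatoms_smul
  exact ⟨γ, hγ, (Measure.ae_measure_singleton_ne_zero hS hμS).mono hfix⟩

noncomputable abbrev Measure.mapMulAction : MulAction Γ (Measure X) where
  smul γ m := m.map (γ • ·)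
  one_smul m := by
    change m.map (fun x => (1 : Γ) • x) = m
    simp
  mul_smul γ δ m := by
    change m.map _ = (m.map _).map _
    rw [Measure.map_map (measurable_const_smul γ) (measurable_const_smul δ)]
    simp [Function.comp_def, mul_smul]

theorem measurable_dirac_smul_apply (γ : Γ) {s : Set X} (hs : MeasurableSet s) :
    Measurable fun x : X => Measure.dirac (γ • x) s :=
  (Measure.measurable_coe hs).comp (Measure.measurable_dirac.comp (measurable_const_smul γ))

noncomputable def orbitAverage (N : Subgroup Γ) [Fintype N] : Kernel X X where
  toFun x := (Fintype.card N : ℝ≥0∞)⁻¹ • ∑ n : N, Measure.dirac ((n : Γ) • x)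
  measurable' := by
    refine Measure.measurable_of_measurable_coe _ fun s hs => ?_
    simp only [Measure.smul_apply, Measure.coe_finsetSum, Finset.sum_apply, smul_eq_mul]
    exact (Finset.measurable_sum _ fun n _ => measurable_dirac_smul_apply _ hs).const_mul _

variable (N : Subgroup Γ) [Fintype N]

theorem orbitAverage_apply (x : X) :
    orbitAverage N x = (Fintype.card N : ℝ≥0∞)⁻¹ • ∑ n : N, Measure.dirac ((n : Γ) • x) := rfl

instance : IsMarkovKernel (orbitAverage N : Kernel X X) where
  isProbabilityMeasure x := ⟨by
    simp [orbitAverage_apply, ENNReal.inv_mul_cancel (Nat.cast_ne_zero.2 Fintype.card_ne_zero)]⟩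

theorem orbitAverage_smul_of_mem {n : Γ} (hn : n ∈ N) (x : X) :
    orbitAverage N (n • x) = orbitAverage N x := by
  simp only [orbitAverage_apply]
  congr 1
  exact Fintype.sum_equiv (Equiv.mulRight ⟨n, hn⟩) _ _ fun m => by simp [mul_smul]

theorem orbitAverage_smul [N.Normal] (γ : Γ) (x : X) :
    orbitAverage N (γ • x) = (orbitAverage N x).map (γ • ·) := by
  rw [orbitAverage_apply, orbitAverage_apply, Measure.map_smul,
    Measure.map_finset_sum' (measurable_const_smul γ).aemeasurable]
  congr 1
  refine (Fintype.sum_equiv (MulAut.conjNormal γ).toEquiv _ _ fun n => ?_).symm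
  simp [Measure.map_dirac' (measurable_const_smul γ), mul_smul]

theorem orbitAverage_comp {μ : Measure X} (hμ : ∀ n ∈ N, MeasurePreserving (n • ·) μ μ) :
    orbitAverage N ∘ₘ μ = μ := by
  ext s hs
  have hcard : (Fintype.card N : ℝ≥0∞) ≠ 0 := Nat.cast_ne_zero.2 Fintype.card_ne_zero
  have hterm (n : N) : ∫⁻ x, Measure.dirac ((n : Γ) • x) s ∂μ = μ s := by
    simp_rw [Measure.dirac_apply' _ hs]
    rw [← lintegral_indicator_one hs, ← (hμ n n.2).lintegral_comp (measurable_one.indicator hs)]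
  rw [Measure.bind_apply hs (Kernel.aemeasurable _)]
  simp only [orbitAverage_apply, Measure.smul_apply, Measure.coe_finsetSum, Finset.sum_apply,
    smul_eq_mul]
  rw [lintegral_const_mul' _ _ (ENNReal.inv_ne_top.2 hcard),
    lintegral_finsetSum _ fun n _ => measurable_dirac_smul_apply _ hs]
  simp [hterm, ← mul_assoc, ENNReal.inv_mul_cancel hcard]

theorem orbitAverage_apply_compl_range [MeasurableSingletonClass X] (x : X) :
    orbitAverage N x (Set.range fun n : N => (n : Γ) • x)ᶜ = 0 := by
  have hS : MeasurableSet (Set.range fun n : N => (n : Γ) • x)ᶜ :=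
    (Set.finite_range _).measurableSet.compl
  simp [orbitAverage_apply, Measure.dirac_apply' _ hS]

theorem exists_finite_measure_compl_eq_zero_of_map_orbitAverage_eq_dirac
    [MeasurableSingletonClass X] [MeasurableSpace.CountableOrCountablyGenerated X X]
    {μ : Measure X} [IsProbabilityMeasure μ] (hμ : ∀ n ∈ N, MeasurePreserving (n • ·) μ μ)
    {ρ : Measure X} (h : μ.map (orbitAverage N) = Measure.dirac ρ) :
    ∃ S : Set X, S.Finite ∧ μ Sᶜ = 0 := by
  -- `μ` is the barycentre `orbitAverage N ∘ₘ μ` of the orbit averages.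
  obtain rfl : ρ = μ := by
    rw [← orbitAverage_comp N hμ, Measure.bind, h, Measure.join_dirac]
  obtain ⟨x, hx⟩ := (Kernel.ae_eq_const_of_map_eq_dirac h).exists
  exact ⟨_, Set.finite_range _, hx ▸ orbitAverage_apply_compl_range N x⟩

theorem map_orbitAverage_fixedPoints_eq_one [N.Normal] {μ : Measure X} [IsProbabilityMeasure μ]
    {n : Γ} (hn : n ∈ N) : μ.map (orbitAverage N) {m | m.map (n • ·) = m} = 1 := by
  have hfixed : orbitAverage N ⁻¹' {m : Measure X | m.map (n • ·) = m} = Set.univ :=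
    Set.eq_univ_of_forall fun x =>
      (orbitAverage_smul N n x).symm.trans (orbitAverage_smul_of_mem N hn x)
  refine prob_le_one.antisymm ?_
  simpa [hfixed] using Measure.le_map_apply (μ := μ) (orbitAverage N).aemeasurable
    {m : Measure X | m.map (n • ·) = m}

end MeasureTheory

open MeasureTheory

theorem stmt_13_general {Γ X : Type} [Group Γ] [Infinite Γ]
    [MeasurableSpace X] [StandardBorelSpace X] [MulAction Γ X]
    (μ : Measure X) [IsProbabilityMeasure μ]
    (hmp : ∀ γ : Γ, MeasurePreserving (fun x => γ • x) μ μ)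
    (hnontriv : ∀ x : X, μ ≠ Measure.dirac x)
    (hfactors : ∀ (Y : Type) [MeasurableSpace Y] [MulAction Γ Y] (ν : Measure Y),
      IsProbabilityMeasure ν →
      (∀ γ : Γ, MeasurePreserving (fun y => γ • y) ν ν) →
      ∀ π : X → Y, Measurable π → Measure.map π μ = ν →
      (∀ γ : Γ, ∀ᵐ x ∂μ, π (γ • x) = γ • π x) →
      (∀ y : Y, ν ≠ Measure.dirac y) →
      ∀ γ : Γ, γ ≠ 1 → ν {y | γ • y = y} < 1) :
    ∀ N : Subgroup Γ, N.Normal → (N : Set Γ).Finite → N = ⊥ := by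
  intro N hN hNfin
  have : MeasurableConstSMul Γ X := ⟨fun γ => (hmp γ).measurable⟩
  have : Fintype N := hNfin.fintype
  let _ : MulAction Γ (Measure X) := Measure.mapMulAction
  by_contra hbot
  obtain ⟨⟨n₀, hn₀N⟩, hn₀⟩ := Subgroup.ne_bot_iff_exists_ne_one.1 hbot
  set π : Kernel X X := orbitAverage N
  by_cases hdirac : ∃ ρ, μ.map π = Measure.dirac ρ
  · obtain ⟨ρ, hρ⟩ := hdirac
    obtain ⟨S, hS, hμS⟩ :=
      exists_finite_measure_compl_eq_zero_of_map_orbitAverage_eq_dirac N (fun n _ => hmp n) hρ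
    obtain ⟨γ, hγ, hfix⟩ := exists_ne_one_ae_smul_eq hmp hS hμS
    have hlt := hfactors X μ inferInstance hmp id measurable_id Measure.map_id
      (fun _ => ae_of_all _ fun _ => rfl) hnontriv γ hγ
    rw [measure_congr (ae_eq_univ.2 hfix), measure_univ] at hlt
    exact lt_irrefl _ hlt
  · replace hdirac := not_exists.1 hdirac
    have hlt := hfactors (Measure X) (μ.map π) (Measure.isProbabilityMeasure_map π.aemeasurable)
      (fun γ => (hmp γ).map_of_semiconj π.measurable
        (Measure.measurable_map _ (measurable_const_smul γ)) (orbitAverage_smul N γ))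
      π π.measurable rfl (fun γ => ae_of_all _ (orbitAverage_smul N γ)) hdirac n₀
      (by simpa using hn₀)
    exact hlt.ne (map_orbitAverage_fixedPoints_eq_one N hn₀N)

/-- If a countably infinite group `Γ` admits a non-trivial measure-preserving action all of
whose non-trivial factors are faithful, then `Γ` contains no non-trivial finite normal
subgroup. -/
theorem stmt_13 {Γ X : Type} [Group Γ] [Countable Γ] [Infinite Γ]
    [MeasurableSpace X] [StandardBorelSpace X] [MulAction Γ X]
    (μ : Measure X) [IsProbabilityMeasure μ]
    (hmp : ∀ γ : Γ, MeasurePreserving (fun x => γ • x) μ μ)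
    (hnontriv : ∀ x : X, μ ≠ Measure.dirac x)
    (hfactors : ∀ (Y : Type) [MeasurableSpace Y] [MulAction Γ Y] (ν : Measure Y),
      IsProbabilityMeasure ν →
      (∀ γ : Γ, MeasurePreserving (fun y => γ • y) ν ν) →
      ∀ π : X → Y, Measurable π → Measure.map π μ = ν →
      (∀ γ : Γ, ∀ᵐ x ∂μ, π (γ • x) = γ • π x) →
      (∀ y : Y, ν ≠ Measure.dirac y) →
      ∀ γ : Γ, γ ≠ 1 → ν {y | γ • y = y} < 1) :
    ∀ N : Subgroup Γ, N.Normal → (N : Set Γ).Finite → N = ⊥ :=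
  stmt_13_general μ hmp hnontriv hfactors
end

section
/- Every non-trivial mixing measure-preserving action of a countably infinite group Γ with no non-trivial finite normal subgroup is essentially free. -/
open MeasureTheory Filter

/-- The action of `Γ` on `(X, μ)` is mixing: along any sequence leaving every finite subset
of `Γ`, `μ(γₙ⁻¹A ∩ B) → μ(A)μ(B)`. -/
def MixingAction {Γ X : Type*} [Group Γ] [MulAction Γ X] [MeasurableSpace X]
    (μ : Measure X) : Prop :=
  ∀ A B : Set X, MeasurableSet A → MeasurableSet B →
    ∀ γ : ℕ → Γ, (∀ F : Finset Γ, ∀ᶠ n in atTop, γ n ∉ F) →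
      Tendsto (fun n => μ ((fun x => γ n • x) ⁻¹' A ∩ B)) atTop (nhds (μ A * μ B))

/-!
Mixing makes fixed-point sets shrink along any sequence `γₙ → ∞`: since `μ` has no atoms and is
tight, `X` splits into finitely many measurable pieces `P` of mass `< δ`, and then
`μ (fixedBy γₙ) ≤ ∑ μ (γₙ⁻¹ P ∩ P) → ∑ μ(P)² < δ`. So an element `g` with
`μ (fixedBy g) > 0` has finitely many conjugates, hence an infinite centralizer, which preserves
`fixedBy g`; mixing along the centralizer gives `μ (fixedBy g) = μ (fixedBy g)²`, i.e. `g` acts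
trivially almost everywhere. The elements acting trivially a.e. form a finite normal subgroup,
which is trivial by assumption. Atoms are ruled out in the same way: an atom has a finite orbit,
hence an infinite stabilizer, hence full mass.
-/

open Set MulAction Topology
open scoped ENNReal

theorem ENNReal.eq_zero_or_one_of_mul_self {a : ℝ≥0∞} (h : a * a = a) (ha : a ≠ ⊤) :
    a = 0 ∨ a = 1 :=
  or_iff_not_imp_left.2 fun h0 => (ENNReal.mul_right_inj h0 ha).1 (h.trans (mul_one a).symm)

theorem Set.Infinite.exists_seq_tendsto_cofinite {α : Type*} {s : Set α} (hs : s.Infinite) :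
    ∃ u : ℕ → α, Tendsto u atTop cofinite ∧ ∀ n, u n ∈ s := by
  refine ⟨fun n => hs.natEmbedding s n, ?_, fun n => (hs.natEmbedding s n).2⟩
  rw [← Nat.cofinite_eq_atTop]
  exact (Subtype.val_injective.comp (hs.natEmbedding s).injective).tendsto_cofinite

theorem MulAction.infinite_stabilizer_of_finite_orbit {G α : Type*} [Group G] [Infinite G]
    [MulAction G α] {a : α} (h : (orbit G a).Finite) : (stabilizer G a : Set G).Infinite := by
  have hindex : (stabilizer G a).index ≠ 0 := by
    rw [index_stabilizer]
    exact ((Set.ncard_pos h).2 (nonempty_orbit a)).ne'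
  have hcard := (stabilizer G a).card_mul_index
  rw [Nat.card_eq_zero_of_infinite (α := G), mul_eq_zero, or_iff_left hindex,
    Nat.card_eq_zero] at hcard
  exact Set.infinite_coe_iff.1 (hcard.resolve_left (not_isEmpty_of_nonempty _))

theorem memPartition_subset_of_mem {α : Type*} {c : ℕ → Set α} {n i : ℕ} (hi : i < n)
    {s : Set α} (hs : s ∈ memPartition c n) {x : α} (hxs : x ∈ s) (hxc : x ∈ c i) : s ⊆ c i := by
  induction n generalizing s with
  | zero => omega
  | succ n ih =>
    obtain ⟨u, hu, rfl | rfl⟩ := hs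
    · rcases (Nat.lt_succ_iff.1 hi).lt_or_eq with hi | rfl
      · exact inter_subset_left.trans (ih hi hu hxs.1)
      · exact inter_subset_right
    · rcases (Nat.lt_succ_iff.1 hi).lt_or_eq with hi | rfl
      · exact sdiff_subset.trans (ih hi hu hxs.1)
      · exact absurd hxc hxs.2

theorem exists_finite_partition_measure_lt {X : Type*} [TopologicalSpace X] [T2Space X]
    [MeasurableSpace X] [OpensMeasurableSpace X] (μ : Measure X) [IsFiniteMeasure μ]
    [NullSingletonClass μ] [μ.OuterRegular] [μ.InnerRegularCompactLTTop] {ε : ℝ≥0∞}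
    (hε : ε ≠ 0) :
    ∃ P : Finset (Set X), (∀ s ∈ P, MeasurableSet s) ∧ (P : Set (Set X)).PairwiseDisjoint id ∧
      ⋃ s ∈ P, s = univ ∧ ∀ s ∈ P, μ s < ε := by
  choose U hxU hUo hUε using fun x : X =>
    ({x} : Set X).exists_isOpen_lt_of_lt (μ := μ) ε (by simpa [pos_iff_ne_zero] using hε)
  obtain ⟨K, -, hK, hKε⟩ := MeasurableSet.univ.exists_isCompact_sdiff_lt (measure_ne_top μ univ) hε
  obtain ⟨t, -, htK⟩ := hK.elim_nhds_subcover U fun x _ => (hUo x).mem_nhds (hxU x rfl)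
  let c : ℕ → Set X := fun n =>
    if h : n < t.card then U (t.equivFin.symm ⟨n, h⟩) else univ \ K
  have hc_meas : ∀ n, MeasurableSet (c n) := by
    intro n
    by_cases h : n < t.card
    · simpa [c, h] using (hUo _).measurableSet
    · simpa [c, h] using MeasurableSet.univ.diff hK.isClosed.measurableSet
  have hc_lt : ∀ n, μ (c n) < ε := by
    intro n
    by_cases h : n < t.card
    · simpa [c, h] using hUε _
    · simpa [c, h] using hKε
  have hcover : ∀ x, ∃ i < t.card + 1, x ∈ c i := by
    intro x
    by_cases hx : x ∈ K
    · obtain ⟨y, hy, hxy⟩ := mem_iUnion₂.1 (htK hx)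
      refine ⟨t.equivFin ⟨y, hy⟩, by omega, ?_⟩
      simpa [c] using hxy
    · exact ⟨t.card, by omega, by simpa [c] using hx⟩
  refine ⟨(finite_memPartition c (t.card + 1)).toFinset, fun s hs => ?_, ?_, ?_, fun s hs => ?_⟩
  · exact MeasurableSpace.measurableSet_memPartition hc_meas _ ((Finite.mem_toFinset _).1 hs)
  · intro s hs s' hs' hss'
    simp only [Finite.coe_toFinset] at hs hs'
    exact disjoint_memPartition c _ hs hs' hss'
  · simp [← sUnion_eq_biUnion]
  · rw [Finite.mem_toFinset] at hs
    rcases s.eq_empty_or_nonempty with rfl | ⟨x, hx⟩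
    · simpa [pos_iff_ne_zero] using hε
    · obtain ⟨i, hi, hxi⟩ := hcover x
      exact (measure_mono (memPartition_subset_of_mem hi hs hx hxi)).trans_lt (hc_lt i)

theorem MulAction.measurableSet_fixedBy {Γ X : Type*} [Group Γ] [MulAction Γ X]
    [MeasurableSpace X] [MeasurableEq X] {g : Γ} (hg : Measurable (g • · : X → X)) :
    MeasurableSet (fixedBy X g) :=
  measurableSet_eq_fun hg measurable_id

theorem measure_fixedBy_conj {Γ X : Type*} [Group Γ] [MulAction Γ X] [MeasurableSpace X]
    [MeasurableEq X] {μ : Measure X} (hmp : ∀ g : Γ, MeasurePreserving (g • · : X → X) μ μ)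
    (g h : Γ) : μ (fixedBy X (h * g * h⁻¹)) = μ (fixedBy X g) := by
  rw [← smul_fixedBy, ← preimage_smul_inv]
  exact (hmp h⁻¹).measure_preimage (measurableSet_fixedBy (hmp g).measurable).nullMeasurableSet

namespace MulAction

def aeKer (Γ : Type*) {X : Type*} [Group Γ] [MulAction Γ X] [MeasurableSpace X]
    (μ : Measure X) : Subgroup Γ where
  carrier := {g | ∀ᵐ x ∂μ, g • x = x}
  one_mem' := by simp
  mul_mem' {a b} ha hb := by
    show ∀ᵐ x ∂μ, (a * b) • x = x
    filter_upwards [ha, hb] with x hax hbx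
    rw [mul_smul, hbx, hax]
  inv_mem' {a} ha := by
    show ∀ᵐ x ∂μ, a⁻¹ • x = x
    filter_upwards [ha] with x hx
    rw [inv_smul_eq_iff, hx]

variable {Γ X : Type*} [Group Γ] [MulAction Γ X] [MeasurableSpace X] {μ : Measure X}

theorem mem_aeKer_iff {g : Γ} : g ∈ aeKer Γ μ ↔ μ (fixedBy X g)ᶜ = 0 := ae_iff

theorem aeKer_normal (hqmp : ∀ g : Γ, Measure.QuasiMeasurePreserving (g • · : X → X) μ μ) :
    (aeKer Γ μ).Normal :=
  ⟨fun g hg h => by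
    filter_upwards [(hqmp h⁻¹).ae hg] with x hx
    rw [mul_smul, mul_smul, hx, smul_inv_smul]⟩

end MulAction

namespace MixingAction

variable {Γ X : Type*} [Group Γ] [MulAction Γ X] [MeasurableSpace X] {μ : Measure X}

theorem tendsto_measure_preimage_inter (hmix : MixingAction (Γ := Γ) μ) {A B : Set X}
    (hA : MeasurableSet A) (hB : MeasurableSet B) {γ : ℕ → Γ} (hγ : Tendsto γ atTop cofinite) :
    Tendsto (fun n => μ ((γ n • ·) ⁻¹' A ∩ B)) atTop (𝓝 (μ A * μ B)) :=
  hmix A B hA hB γ fun F => hγ.eventually F.finite_toSet.eventually_cofinite_notMem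

theorem measure_eq_zero_or_one_of_infinite [IsProbabilityMeasure μ]
    (hmix : MixingAction (Γ := Γ) μ) {T : Set Γ} (hT : T.Infinite) {A : Set X}
    (hA : MeasurableSet A) (hinv : ∀ g ∈ T, (g • ·) ⁻¹' A = A) : μ A = 0 ∨ μ A = 1 := by
  obtain ⟨γ, hγ, hγT⟩ := hT.exists_seq_tendsto_cofinite
  have hlim := hmix.tendsto_measure_preimage_inter hA hA hγ
  simp only [hinv _ (hγT _), inter_self] at hlim
  exact ENNReal.eq_zero_or_one_of_mul_self (tendsto_nhds_unique hlim tendsto_const_nhds)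
    (measure_ne_top μ A)

theorem nullSingletonClass [Infinite Γ] [IsProbabilityMeasure μ] [MeasurableSingletonClass X]
    (hmix : MixingAction (Γ := Γ) μ) (hmp : ∀ g : Γ, MeasurePreserving (g • · : X → X) μ μ)
    (hnontriv : ∀ x : X, μ ≠ Measure.dirac x) : NullSingletonClass μ := by
  refine ⟨fun x => by_contra fun hx => ?_⟩
  have hsmul : ∀ g : Γ, μ {g • x} = μ {x} := fun g => by
    simpa [preimage_smul, smul_set_singleton] using
      ((hmp g).measure_preimage (measurableSet_singleton (g • x)).nullMeasurableSet).symm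
  have horbit : (orbit Γ x).Finite := by
    refine (Measure.finite_const_le_meas_of_disjoint_iUnion μ (pos_iff_ne_zero.2 hx)
      (As := fun y : X => {y}) (fun _ => measurableSet_singleton _)
      (fun y z hyz => disjoint_singleton.2 hyz) (measure_ne_top _ _)).subset ?_
    rintro _ ⟨g, rfl⟩
    exact (hsmul g).ge
  have hinv : ∀ g ∈ (stabilizer Γ x : Set Γ), (g • ·) ⁻¹' {x} = {x} := fun g hg => by
    rw [preimage_smul, smul_set_singleton, inv_smul_eq_iff.2 (mem_stabilizer_iff.1 hg).symm]
  obtain h0 | h1 := hmix.measure_eq_zero_or_one_of_infinite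
    (infinite_stabilizer_of_finite_orbit horbit) (measurableSet_singleton x) hinv
  · exact hx h0
  · refine hnontriv x ?_
    have hae : ∀ᵐ y ∂μ, y ∈ ({x} : Set X) :=
      (prob_compl_eq_zero_iff (measurableSet_singleton x)).2 h1
    rw [← Measure.restrict_eq_self_of_ae_mem hae, Measure.restrict_singleton, h1, one_smul]

section Regular

variable [TopologicalSpace X] [T2Space X] [OpensMeasurableSpace X] [IsProbabilityMeasure μ]
  [NullSingletonClass μ] [μ.OuterRegular] [μ.InnerRegularCompactLTTop]

theorem tendsto_measure_fixedBy (hmix : MixingAction (Γ := Γ) μ) {γ : ℕ → Γ}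
    (hγ : Tendsto γ atTop cofinite) : Tendsto (fun n => μ (fixedBy X (γ n))) atTop (𝓝 0) := by
  refine ENNReal.tendsto_nhds_zero.2 fun ε hε => ?_
  obtain ⟨δ, hδ, hδε⟩ := exists_between hε
  obtain ⟨P, hPm, hPd, hPu, hPδ⟩ := exists_finite_partition_measure_lt μ hδ.ne'
  have hlim : Tendsto (fun n => ∑ s ∈ P, μ ((γ n • ·) ⁻¹' s ∩ s)) atTop
      (𝓝 (∑ s ∈ P, μ s * μ s)) :=
    tendsto_finsetSum _ fun s hs => hmix.tendsto_measure_preimage_inter (hPm s hs) (hPm s hs) hγ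
  have hsum : ∑ s ∈ P, μ s * μ s < ε := calc
    ∑ s ∈ P, μ s * μ s ≤ ∑ s ∈ P, δ * μ s :=
      Finset.sum_le_sum fun s hs => mul_le_mul_left (hPδ s hs).le _
    _ = δ * μ (⋃ s ∈ P, s) := by
      rw [(measure_biUnion_finset hPd hPm : μ (⋃ s ∈ P, s) = ∑ s ∈ P, μ s), Finset.mul_sum]
    _ = δ := by rw [hPu, measure_univ, mul_one]
    _ < ε := hδε
  filter_upwards [hlim.eventually_lt_const hsum] with n hn
  have hfix : fixedBy X (γ n) ⊆ ⋃ s ∈ P, (γ n • ·) ⁻¹' s ∩ s := fun x hx => by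
    obtain ⟨s, hs, hxs⟩ := mem_iUnion₂.1 (hPu.symm ▸ mem_univ x : x ∈ ⋃ s ∈ P, s)
    exact mem_biUnion hs ⟨show γ n • x ∈ s from (mem_fixedBy.1 hx).symm ▸ hxs, hxs⟩
  exact ((measure_mono hfix).trans (measure_biUnion_finset_le P _)).trans hn.le

theorem finite_setOf_le_measure_fixedBy (hmix : MixingAction (Γ := Γ) μ) {r : ℝ≥0∞}
    (hr : r ≠ 0) : {g : Γ | r ≤ μ (fixedBy X g)}.Finite := by
  by_contra hinf
  obtain ⟨γ, hγ, hγr⟩ := Set.Infinite.exists_seq_tendsto_cofinite hinf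
  obtain ⟨n, hn⟩ := ((hmix.tendsto_measure_fixedBy hγ).eventually_lt_const
    (pos_iff_ne_zero.2 hr)).exists
  exact (hγr n).not_gt hn

theorem measure_fixedBy_eq_zero_or_mem_aeKer [Infinite Γ] [MeasurableEq X]
    (hmix : MixingAction (Γ := Γ) μ) (hmp : ∀ g : Γ, MeasurePreserving (g • · : X → X) μ μ)
    (g : Γ) : μ (fixedBy X g) = 0 ∨ g ∈ aeKer Γ μ := by
  refine or_iff_not_imp_left.2 fun h0 => ?_
  have hmeas := measurableSet_fixedBy (hmp g).measurable
  have horbit : (orbit (ConjAct Γ) g).Finite := by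
    refine (hmix.finite_setOf_le_measure_fixedBy h0).subset ?_
    rintro _ ⟨c, rfl⟩
    exact (measure_fixedBy_conj hmp g _).ge
  have : Infinite (ConjAct Γ) := ‹Infinite Γ›
  have hT := (infinite_stabilizer_of_finite_orbit horbit).image
    ConjAct.ofConjAct.injective.injOn
  have hinv : ∀ h ∈ ConjAct.ofConjAct '' (stabilizer (ConjAct Γ) g : Set (ConjAct Γ)),
      (h • ·) ⁻¹' fixedBy X g = fixedBy X g := by
    rintro _ ⟨c, hc, rfl⟩
    ext x
    have hc : ConjAct.ofConjAct c * g * (ConjAct.ofConjAct c)⁻¹ = g := hc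
    conv_lhs => rw [mem_preimage, mem_fixedBy, ← hc, mul_smul, mul_smul, inv_smul_smul]
    exact smul_left_cancel_iff _
  rw [mem_aeKer_iff, prob_compl_eq_zero_iff hmeas]
  exact (hmix.measure_eq_zero_or_one_of_infinite hT hmeas hinv).resolve_left h0

theorem finite_aeKer (hmix : MixingAction (Γ := Γ) μ) : (aeKer Γ μ : Set Γ).Finite :=
  (hmix.finite_setOf_le_measure_fixedBy one_ne_zero).subset fun _ hg =>
    (measure_congr (ae_eq_univ.2 (mem_aeKer_iff.1 hg))).trans measure_univ |>.ge

end Regular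

end MixingAction

/-- Every non-trivial mixing measure-preserving action of a countably infinite group with no
non-trivial finite normal subgroup is essentially free. -/
theorem stmt_15 {Γ X : Type*} [Group Γ] [Countable Γ] [Infinite Γ]
    (hnofin : ∀ N : Subgroup Γ, N.Normal → (N : Set Γ).Finite → N = ⊥)
    [MeasurableSpace X] [StandardBorelSpace X] [MulAction Γ X]
    (μ : Measure X) [IsProbabilityMeasure μ]
    (hmp : ∀ γ : Γ, MeasurePreserving (fun x => γ • x) μ μ)
    (hmix : MixingAction (Γ := Γ) μ)
    (hnontriv : ∀ x : X, μ ≠ Measure.dirac x) :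
    ∀ᵐ x ∂μ, MulAction.stabilizer Γ x = ⊥ := by
  let := upgradeStandardBorel X
  have := hmix.nullSingletonClass hmp hnontriv
  have hker : aeKer Γ μ = ⊥ :=
    hnofin _ (aeKer_normal fun g => (hmp g).quasiMeasurePreserving) hmix.finite_aeKer
  have hfree : ∀ g : Γ, ∀ᵐ x ∂μ, g • x = x → g = 1 := fun g => by
    rcases hmix.measure_fixedBy_eq_zero_or_mem_aeKer hmp g with h0 | hg
    · filter_upwards [measure_eq_zero_iff_ae_notMem.1 h0] with x hx hgx using absurd hgx hx
    · exact Eventually.of_forall fun _ _ => by rwa [hker, Subgroup.mem_bot] at hg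
  filter_upwards [ae_all_iff.2 hfree] with x hx
  exact eq_bot_iff.2 fun g hg => hx g hg
end

section
/- Let F be the free group on generators u, v and H = ⟨u⟩. If K ≤ F is a subgroup such that the left translation action of K on F/H has a finite orbit, then K is contained in a conjugate of H, and hence is cyclic. -/
/-!
Pigeonhole on the finite orbit of `γH` puts a positive power of `γ⁻¹ k γ` into `⟨u⟩` for every
`k ∈ K`. Roots of elements of `⟨u⟩` stay in `⟨u⟩`: writing `x = c r c⁻¹` with `r` cyclically
reduced, the reduced word of `xⁿ` is `c rⁿ c⁻¹`, so it contains every letter of the reduced word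
of `x`, while the reduced words of the elements of `⟨u⟩` are exactly the powers of the single letter
`u` or of the single letter `u⁻¹`.
-/

open Subgroup MulAction

theorem MulAction.exists_pow_smul_eq_of_finite_orbit {G X : Type*} [Group G] [MulAction G X]
    {x : X} (h : (orbit G x).Finite) (g : G) : ∃ n, 0 < n ∧ g ^ n • x = x := by
  have hindex : (stabilizer G x).index ≠ 0 := by
    rw [index_stabilizer]
    exact (Set.ncard_pos h).mpr ⟨x, mem_orbit_self x⟩ |>.ne'
  obtain ⟨n, hn, -, hmem⟩ := exists_pow_mem_of_index_ne_zero hindex g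
  exact ⟨n, hn, hmem⟩

theorem Subgroup.exists_pow_conj_mem_of_finite_orbit {G : Type*} [Group G] {H K : Subgroup G}
    {γ : G} (h : (orbit K (γ : G ⧸ H)).Finite) {k : G} (hk : k ∈ K) :
    ∃ n, 0 < n ∧ (γ⁻¹ * k * γ) ^ n ∈ H := by
  obtain ⟨n, hn, hfix⟩ := exists_pow_smul_eq_of_finite_orbit h ⟨k, hk⟩
  refine ⟨n, hn, ?_⟩
  have : ((k ^ n * γ : G) : G ⧸ H) = γ := hfix
  rw [show (γ⁻¹ * k * γ) ^ n = γ⁻¹ * (k ^ n * γ) by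
    simpa [mul_assoc] using conj_pow (a := γ⁻¹) (b := k) (i := n)]
  exact QuotientGroup.eq.mp this.symm

theorem isCyclic_of_forall_conj_mem {G : Type*} [Group G] {H K : Subgroup G} [IsCyclic H]
    (γ : G) (h : ∀ k ∈ K, γ⁻¹ * k * γ ∈ H) : IsCyclic K := by
  let f : K →* H := ((MulAut.conj γ⁻¹).toMonoidHom.comp K.subtype).codRestrict H
    fun k => by simpa using h k k.2
  refine isCyclic_of_injective f fun k l hkl => ?_
  simpa [f] using congrArg Subtype.val hkl

namespace FreeGroup

variable {α : Type*}

theorem toWord_subset_toWord_pow [DecidableEq α] (x : FreeGroup α) {n : ℕ} (hn : n ≠ 0) :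
    x.toWord ⊆ (x ^ n).toWord := by
  open reduceCyclically in
  rw [toWord_pow, reduce_flatten_replicate x.isReduced_toWord, if_neg hn]
  obtain ⟨n, rfl⟩ := Nat.exists_eq_add_one_of_ne_zero hn
  conv_lhs => rw [← conj_conjugator_reduceCyclically x.toWord]
  intro p hp
  simp only [List.mem_append, List.replicate_succ, List.flatten_cons] at hp ⊢
  tauto

theorem mem_zpowers_of_iff [DecidableEq α] {a : α} {x : FreeGroup α} :
    x ∈ zpowers (of a) ↔ ∃ b, ∀ p ∈ x.toWord, p = (a, b) := by
  constructor
  · rintro ⟨m, rfl⟩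
    obtain ⟨k, rfl | rfl⟩ : ∃ k : ℕ, m = k ∨ m = -k := ⟨m.natAbs, Int.natAbs_eq m⟩
    · exact ⟨true, by simp⟩
    · exact ⟨false, by simp [invRev]⟩
  · rintro ⟨b, hb⟩
    have hx : x = mk [(a, b)] ^ x.toWord.length := by
      rw [pow_mk, List.flatten_replicate_singleton, ← List.eq_replicate_iff.mpr ⟨rfl, hb⟩,
        mk_toWord]
    rw [hx]
    refine pow_mem ?_ _
    cases b
    · exact inv_mem (mem_zpowers (of a))
    · exact mem_zpowers (of a)

theorem mem_zpowers_of_of_pow_mem {a : α} {x : FreeGroup α} {n : ℕ} (hn : n ≠ 0)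
    (h : x ^ n ∈ zpowers (of a)) : x ∈ zpowers (of a) := by
  classical
  obtain ⟨b, hb⟩ := mem_zpowers_of_iff.mp h
  exact mem_zpowers_of_iff.mpr ⟨b, fun p hp => hb p (toWord_subset_toWord_pow x hn hp)⟩

end FreeGroup

/-- In the free group `F` on two generators `u, v` (here `F = FreeGroup Bool`, with
`u = of true`, `v = of false`) with `H = ⟨u⟩`: if a subgroup `K ≤ F` has a finite orbit for
its left translation action on the coset space `F/H`, then `K` is contained in a conjugate
of `H`, and hence `K` is cyclic. -/
theorem stmt_18 (u : FreeGroup Bool) (hu : u = FreeGroup.of true)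
    (H : Subgroup (FreeGroup Bool)) (hH : H = Subgroup.zpowers u)
    (K : Subgroup (FreeGroup Bool))
    (horb : ∃ q : FreeGroup Bool ⧸ H, (MulAction.orbit K q).Finite) :
    (∃ γ : FreeGroup Bool, ∀ k ∈ K, γ⁻¹ * k * γ ∈ H) ∧ IsCyclic K := by
  subst hu hH
  obtain ⟨q, hq⟩ := horb
  obtain ⟨γ, rfl⟩ := QuotientGroup.mk_surjective q
  have hconj : ∀ k ∈ K, γ⁻¹ * k * γ ∈ zpowers (FreeGroup.of true) := fun k hk => by
    obtain ⟨n, hn, hpow⟩ := exists_pow_conj_mem_of_finite_orbit hq hk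
    exact FreeGroup.mem_zpowers_of_of_pow_mem hn.ne' hpow
  exact ⟨⟨γ, hconj⟩, isCyclic_of_forall_conj_mem γ hconj⟩
end
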